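/- arXiv:1401.4741 — 4 statements merged into one kernel-verified Lean document; each statement's English description precedes it below -/
import Mathlib

section
/- For any smooth compactly supported function u on [0,∞), the following identity holds: ‖(D_t² + t)u‖² = ‖D_t²u‖² + ‖tu‖² + 2‖√t · D_t u‖² − |u(0)|², where D_t = −i d/dt, all norms are L²(0,∞) norms, and |u(0)| is the modulus of the boundary value. -/
open MeasureTheory Set

private lemma hasDerivAt_re' {f : ℝ → ℂ} {f' : ℂ} {x : ℝ} (h : HasDerivAt f f' x) :
    HasDerivAt (fun t => (f t).re) f'.re x :=
  Complex.reCLM.hasFDerivAt.comp_hasDerivAt x h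

private lemma hasDerivAt_im' {f : ℝ → ℂ} {f' : ℂ} {x : ℝ} (h : HasDerivAt f f' x) :
    HasDerivAt (fun t => (f t).im) f'.im x :=
  Complex.imCLM.hasFDerivAt.comp_hasDerivAt x h

private lemma hcs2 {α β γ δ : Type*} [TopologicalSpace α] [Zero β] [Zero γ] [Zero δ]
    {f : α → β} {g : α → γ} {h : α → δ}
    (hf : HasCompactSupport f) (hg : HasCompactSupport g)
    (hh : ∀ x, f x = 0 → g x = 0 → h x = 0) : HasCompactSupport h := by
  rw [hasCompactSupport_iff_eventuallyEq] at hf hg ⊢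
  filter_upwards [hf, hg] with x hx hgx
  exact hh x hx hgx

/-- `‖(D_t² + t)u‖² = ‖D_t²u‖² + ‖tu‖² + 2‖√t D_t u‖² − |u(0)|²` for smooth
compactly supported `u` on `[0,∞)`, with `D_t = -i d/dt` (so `(D_t²+t)u = -u'' + tu`). -/
theorem airy_operator_norm_identity (u : ℝ → ℂ) (hu : ContDiff ℝ (⊤ : ℕ∞) u)
    (hsupp : HasCompactSupport u) :
    ∫ t in Ioi (0:ℝ), ‖-(deriv (deriv u) t) + (t : ℂ) * u t‖ ^ 2
      = (∫ t in Ioi (0:ℝ), ‖deriv (deriv u) t‖ ^ 2)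
        + (∫ t in Ioi (0:ℝ), ‖(t : ℂ) * u t‖ ^ 2)
        + 2 * (∫ t in Ioi (0:ℝ), t * ‖deriv u t‖ ^ 2)
        - ‖u 0‖ ^ 2 := by
  set u1 := deriv u with hu1def
  set u2 := deriv u1 with hu2def
  have huinf : ContDiff ℝ (⊤ : ℕ∞) u := hu.of_le (by simp)
  have hu1c : ContDiff ℝ (⊤ : ℕ∞) u1 := by
    simpa using huinf.iterate_deriv 1
  have hu2c : ContDiff ℝ (⊤ : ℕ∞) u2 := by
    simpa [Function.iterate_succ, hu1def, hu2def] using huinf.iterate_deriv 2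
  have hle : (1 : WithTop ℕ∞) ≤ ((⊤ : ℕ∞) : WithTop ℕ∞) := by exact_mod_cast le_top
  have hud : ∀ x, HasDerivAt u (u1 x) x := fun x =>
    (huinf.differentiable (by simp) x).hasDerivAt
  have hu1d : ∀ x, HasDerivAt u1 (u2 x) x := fun x =>
    (hu1c.differentiable (by simp) x).hasDerivAt
  have hcu : Continuous u := huinf.continuous
  have hcu1 : Continuous u1 := hu1c.continuous
  have hcu2 : Continuous u2 := hu2c.continuous
  have hs1 : HasCompactSupport u1 := hsupp.deriv
  have hs2 : HasCompactSupport u2 := hs1.deriv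
  -- the integrand functions
  set p : ℝ → ℝ := fun t => ‖-(u2 t) + (t : ℂ) * u t‖ ^ 2 with hp
  set q : ℝ → ℝ := fun t => ‖u2 t‖ ^ 2 with hq
  set r : ℝ → ℝ := fun t => ‖(t : ℂ) * u t‖ ^ 2 with hr
  set s : ℝ → ℝ := fun t => t * ‖u1 t‖ ^ 2 with hs
  -- boundary function and its derivative
  set F : ℝ → ℝ := fun t =>
    -2 * t * ((u1 t).re * (u t).re + (u1 t).im * (u t).im)
      + ((u t).re ^ 2 + (u t).im ^ 2) with hF
  set G : ℝ → ℝ := fun t =>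
    -2 * t * ((u2 t).re * (u t).re + (u2 t).im * (u t).im)
      - 2 * t * ((u1 t).re ^ 2 + (u1 t).im ^ 2) with hG
  have hFderiv : ∀ x, HasDerivAt F (G x) x := by
    intro x
    have h1 : HasDerivAt (fun t => (u1 t).re * (u t).re + (u1 t).im * (u t).im)
        ((u2 x).re * (u x).re + (u1 x).re * (u1 x).re
          + ((u2 x).im * (u x).im + (u1 x).im * (u1 x).im)) x :=
      ((hasDerivAt_re' (hu1d x)).mul (hasDerivAt_re' (hud x))).add
        ((hasDerivAt_im' (hu1d x)).mul (hasDerivAt_im' (hud x)))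
    have h2 : HasDerivAt (fun t : ℝ => -2 * t) (-2) x := by
      simpa using (hasDerivAt_id x).const_mul (-2 : ℝ)
    have h3 : HasDerivAt (fun t => (u t).re ^ 2 + (u t).im ^ 2)
        (2 * (u x).re ^ 1 * (u1 x).re + 2 * (u x).im ^ 1 * (u1 x).im) x :=
      ((hasDerivAt_re' (hud x)).pow 2).add ((hasDerivAt_im' (hud x)).pow 2)
    have := (h2.mul h1).add h3
    refine this.congr_deriv ?_
    simp only [hG]
    ring
  have hpqrs : ∀ x, p x - q x - r x - 2 * s x = G x := by
    intro x
    simp only [hp, hq, hr, hs, hG, ← Complex.normSq_eq_norm_sq,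
      Complex.normSq_apply, Complex.add_re, Complex.add_im, Complex.mul_re, Complex.mul_im,
      Complex.neg_re, Complex.neg_im, Complex.ofReal_re, Complex.ofReal_im]
    ring
  -- integrability
  have hip : IntegrableOn p (Ioi 0) := by
    have hc : Continuous p := ((hcu2.neg.add ((Complex.continuous_ofReal).mul hcu)).norm.pow 2)
    have hcs : HasCompactSupport p := hcs2 hs2 hsupp
      (fun x h1 h2 => by simp [hp, h1, h2])
    exact (hc.integrable_of_hasCompactSupport hcs).integrableOn
  have hiq : IntegrableOn q (Ioi 0) := by
    have hc : Continuous q := (hcu2.norm.pow 2)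
    have hcs : HasCompactSupport q := hcs2 hs2 hs2 (fun x h1 _ => by simp [hq, h1])
    exact (hc.integrable_of_hasCompactSupport hcs).integrableOn
  have hir : IntegrableOn r (Ioi 0) := by
    have hc : Continuous r := (((Complex.continuous_ofReal).mul hcu).norm.pow 2)
    have hcs : HasCompactSupport r := hcs2 hsupp hsupp (fun x h1 _ => by simp [hr, h1])
    exact (hc.integrable_of_hasCompactSupport hcs).integrableOn
  have his : IntegrableOn s (Ioi 0) := by
    have hc : Continuous s := continuous_id.mul (hcu1.norm.pow 2)
    have hcs : HasCompactSupport s := hcs2 hs1 hs1 (fun x h1 _ => by simp [hs, h1])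
    exact (hc.integrable_of_hasCompactSupport hcs).integrableOn
  have hiG : IntegrableOn G (Ioi 0) := by
    have : G = fun x => p x - q x - r x - 2 * s x := funext fun x => (hpqrs x).symm
    rw [this]
    exact ((hip.sub hiq).sub hir).sub (his.const_mul 2)
  -- F has compact support, hence tends to 0 at infinity
  have hFcs : HasCompactSupport F := hcs2 hsupp hs1
    (fun x h1 h2 => by simp [hF, h1, h2])
  have hFtendsto : Filter.Tendsto F Filter.atTop (nhds 0) := by
    obtain ⟨C, hC⟩ := hFcs.isCompact.bddAbove
    have hz : ∀ x, C + 1 ≤ x → F x = 0 := by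
      intro x hx
      by_contra h
      have hmem : x ∈ tsupport F := subset_tsupport F (Function.mem_support.2 h)
      linarith [hC hmem]
    exact Filter.Tendsto.congr'
      (Filter.eventually_atTop.2 ⟨C + 1, fun x hx => (hz x hx).symm⟩) tendsto_const_nhds
  -- the fundamental theorem of calculus step
  have hkey : ∫ t in Ioi (0:ℝ), G t = 0 - F 0 :=
    integral_Ioi_of_hasDerivAt_of_tendsto' (fun x _ => hFderiv x) hiG hFtendsto
  have hF0 : F 0 = ‖u 0‖ ^ 2 := by
    simp only [hF, ← Complex.normSq_eq_norm_sq, Complex.normSq_apply]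
    ring
  -- put everything together
  have hsplit : ∫ t in Ioi (0:ℝ), G t
      = (∫ t in Ioi (0:ℝ), p t) - (∫ t in Ioi (0:ℝ), q t) - (∫ t in Ioi (0:ℝ), r t)
        - 2 * ∫ t in Ioi (0:ℝ), s t := by
    have hi1 : IntegrableOn (fun t => p t - q t) (Ioi 0) := hip.sub hiq
    have hi2 : IntegrableOn (fun t => p t - q t - r t) (Ioi 0) := hi1.sub hir
    have hi3 : IntegrableOn (fun t => 2 * s t) (Ioi 0) := his.const_mul 2
    rw [← integral_const_mul, ← integral_sub hip hiq, ← integral_sub hi1 hir,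
      ← integral_sub hi2 hi3]
    exact integral_congr_ae (Filter.Eventually.of_forall fun x => (hpqrs x).symm)
  rw [hsplit, hF0] at hkey
  have hfin : ∫ t in Ioi (0:ℝ), p t
      = (∫ t in Ioi (0:ℝ), q t) + (∫ t in Ioi (0:ℝ), r t) + 2 * (∫ t in Ioi (0:ℝ), s t)
        - ‖u 0‖ ^ 2 := by linarith
  simpa [hp, hq, hr, hs, hu1def, hu2def] using hfin
end

section
/- There exists a constant C > 0 such that for every u in the space B = {u ∈ L²(0,∞) : u'' ∈ L², t·u ∈ L²}, one has ‖u‖_B ≤ C (‖u‖_{L²} + ‖(D_t² + t)u‖_{L²}), where ‖u‖_B = ‖D_t² u‖ + ‖t u‖ + ‖u‖. -/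
open MeasureTheory Set

/-- The `L²(0,∞)` norm of a function. -/
noncomputable def L2norm (f : ℝ → ℂ) : ℝ :=
  Real.sqrt (∫ t in Ioi (0:ℝ), ‖f t‖ ^ 2)

/-!
Expanding `‖-u'' + t u‖²` and integrating by parts on `[0, R]` gives
`∫₀ᴿ ‖-u'' + t u‖² = ∫₀ᴿ ‖u''‖² + ∫₀ᴿ ‖t u‖² + 2 ∫₀ᴿ t ‖u'‖² - (R (‖u‖²)'(R) - ‖u R‖²) - ‖u 0‖²`.
Since `‖u‖²` is integrable, `R (‖u‖²)'(R)` cannot stay above any `ε > 0`, so along a sequence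
`R → ∞` the boundary term at `R` is negligible. The term at `0` is controlled by Taylor's formula
`u 0 = u t - t u'(t) + ∫₀ᵗ s u''(s) ds` averaged over `t ∈ [0, 1]`, which gives
`‖u 0‖² ≤ 4 ∫₀¹ ‖u‖² + 2 ∫₀¹ t ‖u'‖² + ⅓ ∫₀¹ ‖u''‖²`; its middle term is absorbed by the weighted
term of the identity, so `u' ∈ L²` is never needed. Hence
`⅔ ‖u''‖² + ‖t u‖² ≤ ‖(D_t² + t) u‖² + 4 ‖u‖²`, and the theorem follows by taking square roots.
-/

open Filter Topology
open scoped RealInnerProductSpace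

theorem MeasureTheory.MemLp.integrable_norm_sq {α F : Type*} [MeasurableSpace α] {μ : Measure α}
    [NormedAddCommGroup F] {f : α → F} (hf : MemLp f 2 μ) :
    Integrable (fun x => ‖f x‖ ^ 2) μ :=
  hf.integrable_norm_pow two_ne_zero

theorem sq_integral_mul_le_integral_sq_mul_integral_sq {α : Type*} [MeasurableSpace α]
    {μ : Measure α} {f g : α → ℝ} (hf : Integrable (fun x => f x ^ 2) μ)
    (hg : Integrable (fun x => g x ^ 2) μ) (hfg : Integrable (fun x => f x * g x) μ) :
    (∫ x, f x * g x ∂μ) ^ 2 ≤ (∫ x, f x ^ 2 ∂μ) * ∫ x, g x ^ 2 ∂μ := by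
  have hquad : ∀ c : ℝ, 0 ≤ (∫ x, f x ^ 2 ∂μ) * (c * c) + (-2 * ∫ x, f x * g x ∂μ) * c
      + ∫ x, g x ^ 2 ∂μ := by
    intro c
    have hexp : (fun x => (c * f x - g x) ^ 2)
        = fun x => c ^ 2 * f x ^ 2 - 2 * c * (f x * g x) + g x ^ 2 := by
      ext x; ring
    have h0 : 0 ≤ ∫ x, (c * f x - g x) ^ 2 ∂μ := integral_nonneg fun x => sq_nonneg _
    rw [hexp, integral_add _ hg, integral_sub, integral_const_mul, integral_const_mul] at h0
    · linarith
    exacts [hf.const_mul _, hfg.const_mul _, (hf.const_mul _).sub (hfg.const_mul _)]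
  have := discrim_le_zero hquad
  rw [discrim] at this
  linarith

theorem Real.sqrt_le_mul_sqrt_add_sqrt {x y z c : ℝ} (hc : 0 ≤ c) (hy : 0 ≤ y) (hz : 0 ≤ z)
    (h : x ≤ c ^ 2 * (y + z)) : √x ≤ c * (√y + √z) := by
  refine Real.sqrt_le_iff.mpr ⟨by positivity, ?_⟩
  have := Real.sq_sqrt hy
  have := Real.sq_sqrt hz
  nlinarith [mul_nonneg (mul_nonneg (sq_nonneg c) (Real.sqrt_nonneg y)) (Real.sqrt_nonneg z)]

theorem frequently_mul_deriv_lt_of_integrableOn_Ioi {φ φ' : ℝ → ℝ} {a ε : ℝ} (hε : 0 < ε)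
    (hφ : ∀ t, HasDerivAt φ (φ' t) t) (hφ0 : ∀ t, 0 ≤ φ t) (hint : IntegrableOn φ (Ioi a)) :
    ∃ᶠ R in atTop, R * φ' R < ε := by
  intro hge
  simp only [not_lt] at hge
  obtain ⟨S, hS⟩ := (hge.and (eventually_gt_atTop (max a 0))).exists_forall_of_atTop
  have hmono : StrictMonoOn φ (Ici S) := by
    refine strictMonoOn_of_deriv_pos (convex_Ici S)
      (fun t _ => (hφ t).continuousAt.continuousWithinAt) fun t ht => ?_
    rw [interior_Ici] at ht
    obtain ⟨hεt, hta⟩ := hS t ht.le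
    rw [(hφ t).deriv]
    have ht0 : 0 < t := (le_max_right a 0).trans_lt hta
    nlinarith
  have hpos : 0 < φ (S + 1) :=
    (hφ0 S).trans_lt (hmono self_mem_Ici (by simp) (by linarith))
  have hconst : IntegrableOn (fun _ => φ (S + 1)) (Ioi (S + 1)) := by
    refine Integrable.mono' (hint.mono_set (Ioi_subset_Ioi ?_)) aestronglyMeasurable_const ?_
    · linarith [(le_max_left a 0).trans_lt (hS S le_rfl).2]
    · filter_upwards [ae_restrict_mem measurableSet_Ioi] with t ht
      rw [Real.norm_of_nonneg hpos.le]
      exact hmono.monotoneOn (by simp) (by simp at ht ⊢; linarith) ht.le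
  simp [integrableOn_const_iff, hpos.ne'] at hconst

theorem intervalIntegral_le_setIntegral_Ioi {f : ℝ → ℝ} {a b : ℝ} (hf : ∀ x, 0 ≤ f x)
    (hint : IntegrableOn f (Ioi a)) (hab : a ≤ b) : ∫ x in a..b, f x ≤ ∫ x in Ioi a, f x := by
  rw [intervalIntegral.integral_of_le hab]
  exact setIntegral_mono_set hint (Eventually.of_forall hf) Ioc_subset_Ioi_self.eventuallyLE

theorem sq_norm_intervalIntegral_smul_le {E : Type*} [NormedAddCommGroup E]
    [InnerProductSpace ℝ E] [CompleteSpace E] {v : ℝ → E} (hv : Continuous v) {t : ℝ} (ht : 0 ≤ t) :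
    ‖∫ s in 0..t, s • v s‖ ^ 2 ≤ t ^ 3 / 3 * ∫ s in 0..t, ‖v s‖ ^ 2 := by
  have hnorm : ‖∫ s in 0..t, s • v s‖ ≤ ∫ s in 0..t, s * ‖v s‖ := by
    refine (intervalIntegral.norm_integral_le_integral_norm ht).trans_eq
      (intervalIntegral.integral_congr fun s hs => ?_)
    rw [uIcc_of_le ht] at hs
    simp [norm_smul, abs_of_nonneg hs.1]
  have hcs := sq_integral_mul_le_integral_sq_mul_integral_sq
    (μ := volume.restrict (Ioc 0 t)) (f := fun s => s) (g := fun s => ‖v s‖)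
    ((continuous_pow 2).integrableOn_Ioc) ((hv.norm.pow 2).integrableOn_Ioc)
    ((continuous_id.mul hv.norm).integrableOn_Ioc)
  simp only [← intervalIntegral.integral_of_le ht, integral_pow] at hcs
  calc ‖∫ s in 0..t, s • v s‖ ^ 2 ≤ (∫ s in 0..t, s * ‖v s‖) ^ 2 :=
        pow_le_pow_left₀ (norm_nonneg _) hnorm 2
    _ ≤ _ := hcs.trans_eq (by ring)

section SecondOrder

variable {E : Type*} [NormedAddCommGroup E] [InnerProductSpace ℝ E] {u : ℝ → E}

theorem ContDiff.hasDerivAt_of_two (hu : ContDiff ℝ 2 u) (t : ℝ) :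
    HasDerivAt u (deriv u t) t :=
  (hu.differentiable two_ne_zero t).hasDerivAt

theorem ContDiff.hasDerivAt_deriv_of_two (hu : ContDiff ℝ 2 u) (t : ℝ) :
    HasDerivAt (deriv u) (deriv (deriv u) t) t :=
  ((hu.deriv' (n := 1)).differentiable one_ne_zero t).hasDerivAt

theorem ContDiff.continuous_deriv_deriv_of_two (hu : ContDiff ℝ 2 u) :
    Continuous (deriv (deriv u)) :=
  (hu.deriv' (n := 1)).continuous_deriv_one

theorem integral_norm_sq_airy_eq (hu : ContDiff ℝ 2 u) (R : ℝ) :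
    ∫ t in 0..R, ‖-deriv (deriv u) t + t • u t‖ ^ 2 =
      (∫ t in 0..R, ‖deriv (deriv u) t‖ ^ 2) + (∫ t in 0..R, ‖t • u t‖ ^ 2)
        + 2 * (∫ t in 0..R, t * ‖deriv u t‖ ^ 2)
        - (2 * R * ⟪u R, deriv u R⟫ - ‖u R‖ ^ 2) - ‖u 0‖ ^ 2 := by
  have hu1 := hu.hasDerivAt_of_two
  have hu2 := hu.hasDerivAt_deriv_of_two
  have hc0 : Continuous u := hu.continuous
  have hc1 : Continuous (deriv u) := hu.continuous_deriv one_le_two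
  have hc2 := hu.continuous_deriv_deriv_of_two
  have hboundary : ∀ t, HasDerivAt (fun t => 2 * t * ⟪u t, deriv u t⟫ - ‖u t‖ ^ 2)
      (2 * t * ⟪deriv (deriv u) t, u t⟫ + 2 * (t * ‖deriv u t‖ ^ 2)) t := by
    intro t
    refine ((((hasDerivAt_id' t).const_mul 2).fun_mul ((hu1 t).inner ℝ (hu2 t))).fun_sub
      (hu1 t).norm_sq).congr_deriv ?_
    rw [real_inner_self_eq_norm_sq, real_inner_comm (u t)]
    ring
  have hpt : ∀ t : ℝ, ‖-deriv (deriv u) t + t • u t‖ ^ 2 =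
      ‖deriv (deriv u) t‖ ^ 2 + ‖t • u t‖ ^ 2 + 2 * (t * ‖deriv u t‖ ^ 2)
        - (2 * t * ⟪deriv (deriv u) t, u t⟫ + 2 * (t * ‖deriv u t‖ ^ 2)) := by
    intro t
    rw [norm_add_sq_real, norm_neg, inner_neg_left, real_inner_smul_right]
    ring
  simp_rw [hpt]
  rw [intervalIntegral.integral_sub, intervalIntegral.integral_add, intervalIntegral.integral_add,
    intervalIntegral.integral_const_mul,
    intervalIntegral.integral_eq_sub_of_hasDerivAt (fun t _ => hboundary t)]
  · ring
  all_goals exact Continuous.intervalIntegrable (by fun_prop) _ _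

theorem apply_zero_eq_sub_smul_deriv_add_integral [CompleteSpace E] (hu : ContDiff ℝ 2 u)
    (t : ℝ) :
    u 0 = u t - t • deriv u t + ∫ s in 0..t, s • deriv (deriv u) s := by
  have hderiv : ∀ s, HasDerivAt (fun s => u s - s • deriv u s) (-(s • deriv (deriv u) s)) s := by
    intro s
    refine ((hu.hasDerivAt_of_two s).sub
      ((hasDerivAt_id' s).smul (hu.hasDerivAt_deriv_of_two s))).congr_deriv ?_
    simp
  have hftc := intervalIntegral.integral_eq_sub_of_hasDerivAt (fun s _ => hderiv s)
    ((continuous_id.smul hu.continuous_deriv_deriv_of_two).neg.intervalIntegrable 0 t)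
  rw [intervalIntegral.integral_neg, zero_smul, sub_zero, neg_eq_iff_eq_neg, neg_sub] at hftc
  rw [hftc]
  abel

theorem sq_norm_apply_zero_le [CompleteSpace E] (hu : ContDiff ℝ 2 u) :
    ‖u 0‖ ^ 2 ≤ 4 * (∫ t in 0..1, ‖u t‖ ^ 2) + 2 * (∫ t in 0..1, t * ‖deriv u t‖ ^ 2)
      + 1 / 3 * ∫ t in 0..1, ‖deriv (deriv u) t‖ ^ 2 := by
  set A := ∫ t in 0..1, ‖deriv (deriv u) t‖ ^ 2
  have hc0 : Continuous u := hu.continuous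
  have hc1 : Continuous (deriv u) := hu.continuous_deriv one_le_two
  have hc2 := hu.continuous_deriv_deriv_of_two
  have hpt : ∀ t ∈ Icc (0:ℝ) 1,
      ‖u 0‖ ^ 2 ≤ 4 * ‖u t‖ ^ 2 + 2 * (t * ‖deriv u t‖ ^ 2) + 4 / 3 * A * t ^ 3 := by
    rintro t ⟨ht0, ht1⟩
    set r := ∫ s in 0..t, s • deriv (deriv u) s
    have htaylor : ‖u 0‖ ≤ ‖u t‖ + t * ‖deriv u t‖ + ‖r‖ := by
      rw [apply_zero_eq_sub_smul_deriv_add_integral hu t]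
      refine (norm_add_le _ _).trans ?_
      grw [norm_sub_le, norm_smul, Real.norm_of_nonneg ht0]
    have hr : ‖r‖ ^ 2 ≤ t ^ 3 / 3 * A := by
      refine (sq_norm_intervalIntegral_smul_le hc2 ht0).trans
        (mul_le_mul_of_nonneg_left ?_ (by positivity))
      exact intervalIntegral.integral_mono_interval le_rfl ht0 ht1
        (Eventually.of_forall fun _ => sq_nonneg _) ((hc2.norm.pow 2).intervalIntegrable _ _)
    -- weights `1/4, 1/2, 1/4`; the middle one leaves the factor `2` that Green's identity absorbs
    have hweights : (‖u t‖ + t * ‖deriv u t‖ + ‖r‖) ^ 2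
        ≤ 4 * ‖u t‖ ^ 2 + 2 * (t * ‖deriv u t‖) ^ 2 + 4 * ‖r‖ ^ 2 := by
      nlinarith [sq_nonneg (‖u t‖ + ‖r‖ - t * ‖deriv u t‖), sq_nonneg (‖u t‖ - ‖r‖)]
    have ht2 : (t * ‖deriv u t‖) ^ 2 ≤ t * ‖deriv u t‖ ^ 2 := by
      rw [mul_pow]
      exact mul_le_mul_of_nonneg_right (by nlinarith) (sq_nonneg _)
    nlinarith [pow_le_pow_left₀ (norm_nonneg _) htaylor 2]
  have hint := intervalIntegral.integral_mono_on zero_le_one (μ := volume) intervalIntegrable_const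
    (Continuous.intervalIntegrable (by fun_prop) _ _) hpt
  rw [intervalIntegral.integral_const, intervalIntegral.integral_add, intervalIntegral.integral_add,
    intervalIntegral.integral_const_mul, intervalIntegral.integral_const_mul,
    intervalIntegral.integral_const_mul, integral_pow] at hint
  · norm_num at hint
    linarith
  all_goals exact Continuous.intervalIntegrable (by fun_prop) _ _

theorem airy_energy_estimate [CompleteSpace E] (hu : ContDiff ℝ 2 u)
    (hu0 : MemLp u 2 (volume.restrict (Ioi 0)))
    (hu2 : MemLp (deriv (deriv u)) 2 (volume.restrict (Ioi 0)))
    (htu : MemLp (fun t : ℝ => t • u t) 2 (volume.restrict (Ioi 0))) :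
    2 / 3 * (∫ t in Ioi 0, ‖deriv (deriv u) t‖ ^ 2) + ∫ t in Ioi 0, ‖t • u t‖ ^ 2
      ≤ (∫ t in Ioi 0, ‖-deriv (deriv u) t + t • u t‖ ^ 2) + 4 * ∫ t in Ioi 0, ‖u t‖ ^ 2 := by
  have hU := hu0.integrable_norm_sq
  have hA := hu2.integrable_norm_sq
  have hF : IntegrableOn (fun t => ‖-deriv (deriv u) t + t • u t‖ ^ 2) (Ioi 0) :=
    (hu2.neg.add htu).integrable_norm_sq
  have hlim : Tendsto (fun R => (∫ t in 0..R, ‖deriv (deriv u) t‖ ^ 2) + ∫ t in 0..R, ‖t • u t‖ ^ 2)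
      atTop (𝓝 ((∫ t in Ioi 0, ‖deriv (deriv u) t‖ ^ 2) + ∫ t in Ioi 0, ‖t • u t‖ ^ 2)) :=
    (intervalIntegral_tendsto_integral_Ioi 0 hA tendsto_id).add
      (intervalIntegral_tendsto_integral_Ioi 0 htu.integrable_norm_sq tendsto_id)
  suffices h : ∀ ε > 0, (∫ t in Ioi 0, ‖deriv (deriv u) t‖ ^ 2) + ∫ t in Ioi 0, ‖t • u t‖ ^ 2
      ≤ (∫ t in Ioi 0, ‖-deriv (deriv u) t + t • u t‖ ^ 2) + 4 * (∫ t in Ioi 0, ‖u t‖ ^ 2)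
        + 1 / 3 * (∫ t in Ioi 0, ‖deriv (deriv u) t‖ ^ 2) + ε by
    linarith [le_of_forall_pos_le_add h]
  intro ε hε
  -- `R (‖u‖²)'(R) = 2 R ⟪u R, u' R⟫` bounds the boundary term of Green's identity at `R`
  have hfreq := frequently_mul_deriv_lt_of_integrableOn_Ioi hε
    (fun t => (hu.hasDerivAt_of_two t).norm_sq) (fun t => sq_nonneg _) hU
  refine le_of_tendsto_of_frequently hlim ((hfreq.and_eventually (eventually_ge_atTop 1)).mono ?_)
  rintro R ⟨hRε, hR1⟩
  have hQ : ∫ t in 0..1, t * ‖deriv u t‖ ^ 2 ≤ ∫ t in 0..R, t * ‖deriv u t‖ ^ 2 := by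
    refine intervalIntegral.integral_mono_interval le_rfl zero_le_one hR1 ?_
      ((continuous_id.mul ((hu.continuous_deriv one_le_two).norm.pow 2)).intervalIntegrable _ _)
    filter_upwards [ae_restrict_mem measurableSet_Ioc] with t ht
    exact mul_nonneg ht.1.le (sq_nonneg _)
  have hsq {f : ℝ → E} (t : ℝ) : 0 ≤ ‖f t‖ ^ 2 := sq_nonneg _
  linarith [integral_norm_sq_airy_eq hu R, sq_norm_apply_zero_le hu, hsq (f := u) R,
    intervalIntegral_le_setIntegral_Ioi hsq hU zero_le_one,
    intervalIntegral_le_setIntegral_Ioi hsq hA zero_le_one,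
    intervalIntegral_le_setIntegral_Ioi hsq hF (zero_le_one.trans hR1)]

end SecondOrder

/-- There is `C > 0` such that for every `u` in the maximal domain
`B = {u ∈ L² : u'', tu ∈ L²}` of the Airy operator on `(0,∞)`,
`‖u‖_B = ‖D_t²u‖ + ‖tu‖ + ‖u‖ ≤ C(‖u‖ + ‖(D_t²+t)u‖)`. -/
theorem B_norm_estimate :
    ∃ C > (0:ℝ), ∀ u : ℝ → ℂ, ContDiff ℝ 2 u →
      MemLp u 2 (volume.restrict (Ioi (0:ℝ))) →
      MemLp (deriv (deriv u)) 2 (volume.restrict (Ioi (0:ℝ))) →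
      MemLp (fun t : ℝ => (t:ℂ) * u t) 2 (volume.restrict (Ioi (0:ℝ))) →
      L2norm (deriv (deriv u)) + L2norm (fun t : ℝ => (t:ℂ) * u t) + L2norm u
        ≤ C * (L2norm u + L2norm (fun t : ℝ => -(deriv (deriv u) t) + (t:ℂ) * u t)) := by
  refine ⟨6, by norm_num, fun u hu hu0 hu2 htu => ?_⟩
  simp only [← Complex.real_smul] at htu ⊢
  have hestimate := airy_energy_estimate hu hu0 hu2 htu
  unfold L2norm
  set A := ∫ t in Ioi (0:ℝ), ‖deriv (deriv u) t‖ ^ 2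
  set B := ∫ t in Ioi (0:ℝ), ‖t • u t‖ ^ 2
  set U := ∫ t in Ioi (0:ℝ), ‖u t‖ ^ 2
  set F := ∫ t in Ioi (0:ℝ), ‖-deriv (deriv u) t + t • u t‖ ^ 2
  have hA : 0 ≤ A := setIntegral_nonneg measurableSet_Ioi fun _ _ => sq_nonneg _
  have hB : 0 ≤ B := setIntegral_nonneg measurableSet_Ioi fun _ _ => sq_nonneg _
  have hU : 0 ≤ U := setIntegral_nonneg measurableSet_Ioi fun _ _ => sq_nonneg _
  have hF : 0 ≤ F := setIntegral_nonneg measurableSet_Ioi fun _ _ => sq_nonneg _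
  have hsqrtA := Real.sqrt_le_mul_sqrt_add_sqrt (x := A) (c := 3) (by norm_num) hU hF (by linarith)
  have hsqrtB := Real.sqrt_le_mul_sqrt_add_sqrt (x := B) (c := 2) (by norm_num) hU hF (by linarith)
  have hsqrtU := Real.sqrt_le_mul_sqrt_add_sqrt (x := U) (c := 1) (by norm_num) hU hF (by linarith)
  linarith
end

section
/- For λ > 0, let f_λ(t) = Ai'(e^{2πi/3}λ)^{−1} Ai(t + e^{2πi/3}λ) for t ∈ [0,∞). Then f_λ solves e^{−2πi/3}(D_t² + t)f_λ + λ f_λ = 0 on (0,∞) with f_λ'(0) = 1, and ‖f_λ‖_{L²(0,∞)} = O(λ^{−3/4}) as λ → ∞. -/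
open Filter Asymptotics Real MeasureTheory Set

/-- The Neumann Poisson kernel for the complex-scaled Airy model:
`f_λ(t) = Ai'(e^{2πi/3}λ)⁻¹ · Ai(t + e^{2πi/3}λ)`. -/
noncomputable def poissonAiry (Ai : ℂ → ℂ) (lam t : ℝ) : ℂ :=
  (deriv Ai (Complex.exp ((2 * π / 3 : ℝ) * Complex.I) * lam))⁻¹ *
    Ai ((t : ℂ) + Complex.exp ((2 * π / 3 : ℝ) * Complex.I) * lam)

/-!
Since `ω = e^{2πi/3}` is a cube root of unity, `s ↦ Ai(ω s)` solves `w'' = s w` on the real line,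
as does `s ↦ Ai(s)`, and so do the real and imaginary parts of such solutions. A real solution
with `y(0) ≥ 0 < y'(0)` keeps `y' > 0` on `[0, ∞)`, because `y y'` and then `y'²` increase there;
comparing `y'/y`, a solution of the Riccati equation `r' = s - r²`, with the barrier `(√s - 1)/2`
gives `y' ≥ (√s - 1)/2 · y`. On the real axis the decay of `Ai` forces `Ai'(0) < 0`, so `Ai(ω s)`
and its `s`-derivative `ω Ai'(ω s)` start, and stay, in the closed fourth quadrant. Hence
`Ai'(ωλ) ≠ 0` and `|Ai(ωλ)| ≲ λ^{-1/2} |Ai'(ωλ)|`.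

For `u(t) = Ai(t + z)` with `Im z > 0` one has `(Im ū u')' = Im z · |u|²`. Were `Im ū u'` ever
positive, `Re ū u'` and then `|u|²` would grow without bound, so `Im ū u' ≤ 0` throughout and
`Im z · ‖u‖²_{L²(0,∞)} ≤ |u(0)| |u'(0)|`. With `z = ωλ`, `Im z = (√3/2) λ`, this gives
`‖f_λ‖² ≤ |Ai(ωλ)| / (Im z · |Ai'(ωλ)|) = O(λ^{-3/2})`.
-/

open ComplexConjugate

lemma monotoneOn_Ici_of_hasDerivAt_nonneg {f f' : ℝ → ℝ} {a : ℝ}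
    (hf : ∀ x, HasDerivAt f (f' x) x) (hf' : ∀ x, a < x → 0 ≤ f' x) :
    MonotoneOn f (Ici a) :=
  monotoneOn_of_hasDerivWithinAt_nonneg (convex_Ici a)
    (fun x _ => (hf x).continuousAt.continuousWithinAt)
    (fun x _ => (hf x).hasDerivWithinAt) (fun x hx => hf' x (by rwa [interior_Ici] at hx))

lemma strictMonoOn_Ici_of_hasDerivAt_pos {f f' : ℝ → ℝ} {a : ℝ}
    (hf : ∀ x, HasDerivAt f (f' x) x) (hf' : ∀ x, a < x → 0 < f' x) :
    StrictMonoOn f (Ici a) :=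
  strictMonoOn_of_hasDerivWithinAt_pos (convex_Ici a)
    (fun x _ => (hf x).continuousAt.continuousWithinAt)
    (fun x _ => (hf x).hasDerivWithinAt) (fun x hx => hf' x (by rwa [interior_Ici] at hx))

lemma tendsto_atTop_of_hasDerivAt_ge {f f' : ℝ → ℝ} {c : ℝ} (hc : 0 < c)
    (hf : ∀ x, HasDerivAt f (f' x) x) (hf' : ∀ᶠ x in atTop, c ≤ f' x) :
    Tendsto f atTop atTop := by
  obtain ⟨T, hT⟩ := eventually_atTop.1 hf'
  have hmono : MonotoneOn (fun x => f x - c * x) (Ici T) :=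
    monotoneOn_Ici_of_hasDerivAt_nonneg (fun x => (hf x).sub ((hasDerivAt_id x).const_mul c))
      (fun x hx => by simpa using hT x hx.le)
  refine tendsto_atTop_mono' atTop ?_
    (tendsto_atTop_add_const_left _ (f T - c * T) (tendsto_id.const_mul_atTop hc))
  filter_upwards [eventually_ge_atTop T] with x hx
  have := hmono self_mem_Ici hx hx
  simp only [id] at this ⊢
  linarith

lemma not_integrableOn_Ioi_of_tendsto_atTop {f : ℝ → ℝ} (a : ℝ) (hf : Tendsto f atTop atTop) :
    ¬ IntegrableOn f (Ioi a) := by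
  intro hint
  obtain ⟨T, hT⟩ := eventually_atTop.1 (hf.eventually_ge_atTop 1)
  have hone : IntegrableOn (fun _ => (1 : ℝ)) (Ioi (max a T)) := by
    refine Integrable.mono' (hint.mono_set (Ioi_subset_Ioi (le_max_left a T)))
      aestronglyMeasurable_const ?_
    rw [ae_restrict_iff' measurableSet_Ioi]
    filter_upwards with x hx
    simpa using hT x (le_max_right a T |>.trans hx.le)
  simp [integrableOn_const_iff] at hone

lemma HasDerivAt.re {f : ℝ → ℂ} {f' : ℂ} {t : ℝ} (h : HasDerivAt f f' t) :
    HasDerivAt (fun s => (f s).re) f'.re t :=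
  Complex.reCLM.hasFDerivAt.comp_hasDerivAt t h

lemma HasDerivAt.im {f : ℝ → ℂ} {f' : ℂ} {t : ℝ} (h : HasDerivAt f f' t) :
    HasDerivAt (fun s => (f s).im) f'.im t :=
  Complex.imCLM.hasFDerivAt.comp_hasDerivAt t h

lemma HasDerivAt.comp_ofReal_add {f : ℂ → ℂ} {f' z : ℂ} {t : ℝ} (hf : HasDerivAt f f' (t + z)) :
    HasDerivAt (fun s : ℝ => f (s + z)) f' t :=
  (hf.comp_add_const _ _).comp_ofReal

lemma Complex.norm_le_norm_of_abs_re_le_of_abs_im_le {z w : ℂ} (hre : |z.re| ≤ |w.re|)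
    (him : |z.im| ≤ |w.im|) : ‖z‖ ≤ ‖w‖ := by
  rw [← sq_le_sq₀ (norm_nonneg _) (norm_nonneg _), Complex.sq_norm, Complex.sq_norm,
    Complex.normSq_apply, Complex.normSq_apply]
  nlinarith [sq_le_sq.2 hre, sq_le_sq.2 him]

lemma rpow_neg_three_div_four_sq {x : ℝ} (hx : 0 < x) :
    (x ^ (-(3 : ℝ) / 4)) ^ 2 = (x * √x)⁻¹ := by
  rw [← Real.rpow_natCast, ← Real.rpow_mul hx.le, Real.sqrt_eq_rpow, ← Real.rpow_one_add' hx.le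
    (by norm_num), ← Real.rpow_neg_one, ← Real.rpow_mul hx.le]
  norm_num

structure SolvesAiry {E : Type*} [NormedAddCommGroup E] [NormedSpace ℝ E] (y y' : ℝ → E) :
    Prop where
  hasDerivAt : ∀ s, HasDerivAt y (y' s) s
  hasDerivAt_deriv : ∀ s, HasDerivAt y' (s • y s) s

namespace SolvesAiry

lemma neg {E : Type*} [NormedAddCommGroup E] [NormedSpace ℝ E] {y y' : ℝ → E}
    (h : SolvesAiry y y') : SolvesAiry (-y) (-y') where
  hasDerivAt s := (h.hasDerivAt s).neg
  hasDerivAt_deriv s := by simpa using (h.hasDerivAt_deriv s).neg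

section Real

variable {y y' : ℝ → ℝ} (h : SolvesAiry y y')
include h

lemma monotoneOn_mul_deriv : MonotoneOn (fun s => y s * y' s) (Ici 0) :=
  monotoneOn_Ici_of_hasDerivAt_nonneg (fun s => (h.hasDerivAt s).mul (h.hasDerivAt_deriv s))
    (fun s hs => by simp only [smul_eq_mul]; nlinarith [sq_nonneg (y' s), sq_nonneg (y s)])

lemma monotoneOn_sq (h0 : 0 ≤ y 0 * y' 0) : MonotoneOn (fun s => y s ^ 2) (Ici 0) :=
  monotoneOn_Ici_of_hasDerivAt_nonneg (fun s => (h.hasDerivAt s).pow 2) fun s hs => by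
    have := h.monotoneOn_mul_deriv self_mem_Ici hs.le hs.le
    norm_num at this ⊢
    nlinarith

lemma monotoneOn_deriv_sq (h0 : 0 ≤ y 0 * y' 0) : MonotoneOn (fun s => y' s ^ 2) (Ici 0) :=
  monotoneOn_Ici_of_hasDerivAt_nonneg (fun s => (h.hasDerivAt_deriv s).pow 2) fun s hs => by
    have := h.monotoneOn_mul_deriv self_mem_Ici hs.le hs.le
    norm_num at this ⊢
    nlinarith

lemma deriv_pos (h0 : 0 ≤ y 0) (h1 : 0 < y' 0) {s : ℝ} (hs : 0 ≤ s) : 0 < y' s := by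
  by_contra! hneg
  have hcont : ContinuousOn y' (Icc 0 s) :=
    fun x _ => (h.hasDerivAt_deriv x).continuousAt.continuousWithinAt
  obtain ⟨c, hc, hzero⟩ := intermediate_value_Icc' hs hcont ⟨hneg, h1.le⟩
  have := h.monotoneOn_deriv_sq (mul_nonneg h0 h1.le) self_mem_Ici hc.1 hc.1
  simp only [hzero] at this
  nlinarith

lemma strictMonoOn (h0 : 0 ≤ y 0) (h1 : 0 < y' 0) : StrictMonoOn y (Ici 0) :=
  strictMonoOn_Ici_of_hasDerivAt_pos h.hasDerivAt fun _ hs => h.deriv_pos h0 h1 hs.le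

lemma pos (h0 : 0 ≤ y 0) (h1 : 0 < y' 0) {s : ℝ} (hs : 0 < s) : 0 < y s :=
  h0.trans_lt (h.strictMonoOn h0 h1 self_mem_Ici hs.le hs)

lemma not_tendsto_zero (h0 : 0 ≤ y 0) (h1 : 0 ≤ y' 0) (hne : 0 < y 0 ∨ 0 < y' 0) :
    ¬ Tendsto y atTop (nhds 0) := by
  intro hlim
  rcases h1.lt_or_eq with h1 | h1
  · have hmono := (h.strictMonoOn h0 h1).monotoneOn
    have : y 1 ≤ 0 := ge_of_tendsto hlim <| by
      filter_upwards [eventually_ge_atTop 1] with s hs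
      exact hmono (mem_Ici.2 zero_le_one) (mem_Ici.2 (zero_le_one.trans hs)) hs
    linarith [h.pos h0 h1 one_pos]
  · have hy0 : 0 < y 0 := hne.resolve_right h1.not_lt
    have : y 0 ^ 2 ≤ 0 := ge_of_tendsto (by simpa using hlim.pow 2) <| by
      filter_upwards [eventually_ge_atTop 0] with s hs
      exact h.monotoneOn_sq (by rw [← h1, mul_zero]) self_mem_Ici hs hs
    nlinarith

lemma sqrt_sub_one_mul_le_deriv (h0 : 0 ≤ y 0) (h1 : 0 < y' 0) {s : ℝ} (hs : 1 ≤ s) :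
    (√s - 1) / 2 * y s ≤ y' s := by
  have hf : ∀ x, 1 ≤ x → HasDerivAt (fun x => (√x - 1) / 2 * y x - y' x)
      ((1 / (2 * √x)) / 2 * y x + (√x - 1) / 2 * y' x - x * y x) x := fun x hx =>
    ((((Real.hasDerivAt_sqrt (by positivity)).sub_const 1).div_const 2).mul
      (h.hasDerivAt x)).sub (h.hasDerivAt_deriv x)
  have key := image_le_of_deriv_right_lt_deriv_boundary' (a := 1) (b := s) (B := fun _ => 0)
    (B' := fun _ => 0) (fun x hx => (hf x hx.1).continuousAt.continuousWithinAt)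
    (fun x hx => (hf x hx.1).hasDerivWithinAt) ?_ continuousOn_const
    (fun _ _ => hasDerivWithinAt_const _ _ _) ?_ ⟨hs, le_rfl⟩
  · linarith
  · simp only [Real.sqrt_one, sub_self, zero_div, zero_mul, zero_sub, neg_nonpos]
    exact (h.deriv_pos h0 h1 zero_le_one).le
  · -- where `y' = (√x - 1)/2 · y`, the derivative is `y (1/(4√x) + (√x - 1)²/4 - x) < 0`
    intro x hx hfx
    have hyx : 0 < y x := h.pos h0 h1 (by linarith [hx.1])
    have hr : 1 ≤ √x := Real.one_le_sqrt.2 hx.1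
    have hrr : √x ^ 2 = x := Real.sq_sqrt (by linarith [hx.1])
    have hinv : 1 / (2 * √x) / 2 ≤ 1 / 4 := by
      rw [div_div, div_le_div_iff₀ (by positivity) (by norm_num)]; linarith
    have hy' : y' x = (√x - 1) / 2 * y x := by linarith
    have hsq : (√x - 1) ^ 2 ≤ x - 1 := by nlinarith
    rw [hy']
    nlinarith [mul_le_mul_of_nonneg_right hinv hyx.le, mul_le_mul_of_nonneg_right hsq hyx.le]

end Real

section Complex

variable {w w' : ℝ → ℂ} (h : SolvesAiry w w')
include h

lemma re : SolvesAiry (fun s => (w s).re) (fun s => (w' s).re) where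
  hasDerivAt s := (h.hasDerivAt s).re
  hasDerivAt_deriv s := by simpa using (h.hasDerivAt_deriv s).re

lemma im : SolvesAiry (fun s => (w s).im) (fun s => (w' s).im) where
  hasDerivAt s := (h.hasDerivAt s).im
  hasDerivAt_deriv s := by simpa using (h.hasDerivAt_deriv s).im

lemma star : SolvesAiry (fun s => star (w s)) (fun s => star (w' s)) where
  hasDerivAt s := (h.hasDerivAt s).star
  hasDerivAt_deriv s := by simpa using (h.hasDerivAt_deriv s).star

lemma deriv_ne_zero (hre : 0 ≤ (w 0).re) (hre' : 0 < (w' 0).re) {s : ℝ} (hs : 0 ≤ s) :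
    w' s ≠ 0 := fun h0 => by
  simpa [h0] using h.re.deriv_pos hre hre' hs

lemma sqrt_sub_one_mul_norm_le (hre : 0 ≤ (w 0).re) (hre' : 0 < (w' 0).re) (him : 0 ≤ (w 0).im)
    (him' : 0 < (w' 0).im) {s : ℝ} (hs : 1 ≤ s) : (√s - 1) / 2 * ‖w s‖ ≤ ‖w' s‖ := by
  have hc : 0 ≤ (√s - 1) / 2 := by linarith [Real.one_le_sqrt.2 hs]
  have hs0 : 0 < s := by linarith
  rw [← Complex.norm_of_nonneg hc, ← norm_mul]
  refine Complex.norm_le_norm_of_abs_re_le_of_abs_im_le ?_ ?_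
  · rw [Complex.re_ofReal_mul, abs_of_nonneg (mul_nonneg hc (h.re.pos hre hre' hs0).le),
      abs_of_nonneg (h.re.deriv_pos hre hre' hs0.le).le]
    exact h.re.sqrt_sub_one_mul_le_deriv hre hre' hs
  · rw [Complex.im_ofReal_mul, abs_of_nonneg (mul_nonneg hc (h.im.pos him him' hs0).le),
      abs_of_nonneg (h.im.deriv_pos him him' hs0.le).le]
    exact h.im.sqrt_sub_one_mul_le_deriv him him' hs

end Complex

end SolvesAiry

section ShiftedAiry

variable {u u' : ℝ → ℂ} {z : ℂ} (hu : ∀ t, HasDerivAt u (u' t) t)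
  (hu' : ∀ t, HasDerivAt u' ((t + z) * u t) t)
include hu hu'

lemma hasDerivAt_conj_mul_deriv (t : ℝ) :
    HasDerivAt (fun t => conj (u t) * u' t)
      (((‖u' t‖ ^ 2 : ℝ) : ℂ) + (t + z) * ((‖u t‖ ^ 2 : ℝ) : ℂ)) t := by
  refine ((hu t).star.mul (hu' t)).congr_deriv ?_
  push_cast
  rw [← Complex.conj_mul', ← Complex.conj_mul']
  simp only [Complex.star_def]
  ring

lemma hasDerivAt_im_conj_mul_deriv (t : ℝ) :
    HasDerivAt (fun t => (conj (u t) * u' t).im) (z.im * ‖u t‖ ^ 2) t := by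
  refine (hasDerivAt_conj_mul_deriv hu hu' t).im.congr_deriv ?_
  simp only [Complex.add_im, Complex.mul_im, Complex.add_re, Complex.ofReal_re, Complex.ofReal_im]
  ring

lemma im_conj_mul_deriv_nonpos (hz : 0 < z.im)
    (hint : IntegrableOn (fun t => ‖u t‖ ^ 2) (Ioi 0)) (T : ℝ) : (conj (u T) * u' T).im ≤ 0 := by
  set F : ℝ → ℝ := fun t => (conj (u t) * u' t).im
  set P : ℝ → ℝ := fun t => (conj (u t) * u' t).re
  have hP : ∀ t, HasDerivAt P (‖u' t‖ ^ 2 + (t + z.re) * ‖u t‖ ^ 2) t := fun t => by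
    refine (hasDerivAt_conj_mul_deriv hu hu' t).re.congr_deriv ?_
    simp only [Complex.add_re, Complex.mul_re, Complex.add_im, Complex.ofReal_re,
      Complex.ofReal_im]
    ring
  have hh : ∀ t, HasDerivAt (fun t => ‖u t‖ ^ 2) (2 * P t) t := fun t => by
    refine (hu t).norm_sq.congr_deriv ?_
    rw [Complex.inner, mul_comm (u' t)]
  by_contra! hpos
  have hFmono : MonotoneOn F (Ici T) :=
    monotoneOn_Ici_of_hasDerivAt_nonneg (hasDerivAt_im_conj_mul_deriv hu hu') fun t _ => by
      positivity
  -- far out, `P' ≥ ‖u'‖² + ‖u‖² ≥ 2 ‖u‖ ‖u'‖ ≥ 2 F ≥ 2 F T > 0`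
  have hP' : ∀ᶠ t in atTop, 2 * F T ≤ ‖u' t‖ ^ 2 + (t + z.re) * ‖u t‖ ^ 2 := by
    filter_upwards [eventually_ge_atTop T, eventually_ge_atTop (1 - z.re)] with t hT ha
    have hFt : F T ≤ F t := hFmono self_mem_Ici hT hT
    have hFu : F t ≤ ‖u t‖ * ‖u' t‖ := (le_abs_self _).trans
      ((Complex.abs_im_le_norm _).trans_eq (by rw [norm_mul, Complex.norm_conj]))
    nlinarith [sq_nonneg (‖u t‖ - ‖u' t‖), sq_nonneg ‖u t‖]
  have hPlim := tendsto_atTop_of_hasDerivAt_ge (by positivity) hP hP'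
  have hh' : ∀ᶠ t in atTop, 1 ≤ 2 * P t := by
    filter_upwards [hPlim.eventually_ge_atTop 1] with t ht
    linarith
  exact not_integrableOn_Ioi_of_tendsto_atTop 0
    (tendsto_atTop_of_hasDerivAt_ge one_pos hh hh') hint

-- No integrability hypothesis: otherwise the integral is `0` by convention.
lemma im_mul_integral_norm_sq_le (hz : 0 < z.im) :
    z.im * ∫ t in Ioi 0, ‖u t‖ ^ 2 ≤ ‖u 0‖ * ‖u' 0‖ := by
  by_cases hint : IntegrableOn (fun t => ‖u t‖ ^ 2) (Ioi 0)
  swap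
  · rw [integral_undef hint, mul_zero]
    positivity
  have hF0 : -(conj (u 0) * u' 0).im ≤ ‖u 0‖ * ‖u' 0‖ := (neg_le_abs _).trans
    ((Complex.abs_im_le_norm _).trans_eq (by rw [norm_mul, Complex.norm_conj]))
  refine le_of_tendsto ((intervalIntegral_tendsto_integral_Ioi 0 hint tendsto_id).const_mul z.im) ?_
  filter_upwards with T
  rw [id, ← intervalIntegral.integral_const_mul,
    intervalIntegral.integral_eq_sub_of_hasDerivAt
      (fun t _ => hasDerivAt_im_conj_mul_deriv hu hu' t)
      ((continuous_const.mul (continuous_iff_continuousAt.2 fun t =>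
        (hu t).continuousAt.norm.pow 2)).intervalIntegrable _ _)]
  linarith [im_conj_mul_deriv_nonpos hu hu' hz hint T]

end ShiftedAiry

noncomputable def primCubeRoot : ℂ := Complex.exp ((2 * π / 3 : ℝ) * Complex.I)

lemma primCubeRoot_pow_three : primCubeRoot ^ 3 = 1 := by
  rw [primCubeRoot, ← Complex.exp_nat_mul, ← Complex.exp_two_pi_mul_I]
  push_cast
  ring_nf

lemma primCubeRoot_re : primCubeRoot.re = -(1 / 2) := by
  rw [primCubeRoot, Complex.exp_ofReal_mul_I_re, show 2 * π / 3 = π - π / 3 by ring,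
    Real.cos_pi_sub, Real.cos_pi_div_three]

lemma primCubeRoot_im : primCubeRoot.im = √3 / 2 := by
  rw [primCubeRoot, Complex.exp_ofReal_mul_I_im, show 2 * π / 3 = π - π / 3 by ring,
    Real.sin_pi_sub, Real.sin_pi_div_three]

lemma norm_primCubeRoot : ‖primCubeRoot‖ = 1 := Complex.norm_exp_ofReal_mul_I _

lemma poissonAiry_apply (Ai : ℂ → ℂ) (lam t : ℝ) :
    poissonAiry Ai lam t = (deriv Ai (primCubeRoot * lam))⁻¹ * Ai (t + primCubeRoot * lam) :=
  rfl

section Airy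

variable {Ai : ℂ → ℂ} (hAi : Differentiable ℂ Ai)
include hAi

lemma hasDerivAt_poissonAiry (lam t : ℝ) :
    HasDerivAt (poissonAiry Ai lam)
      ((deriv Ai (primCubeRoot * lam))⁻¹ * deriv Ai (t + primCubeRoot * lam)) t :=
  ((hAi _).hasDerivAt.comp_ofReal_add).const_mul _

lemma deriv_poissonAiry_zero {lam : ℝ} (hlam : deriv Ai (primCubeRoot * lam) ≠ 0) :
    deriv (poissonAiry Ai lam) 0 = 1 := by
  rw [(hasDerivAt_poissonAiry hAi lam 0).deriv, Complex.ofReal_zero, zero_add,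
    inv_mul_cancel₀ hlam]

variable (hODE : ∀ w, deriv (deriv Ai) w = w * Ai w)
include hODE

lemma solvesAiry_comp_mul {c : ℂ} (hc : c ^ 3 = 1) :
    SolvesAiry (fun s : ℝ => Ai (c * s)) (fun s => c * deriv Ai (c * s)) where
  hasDerivAt s := by
    simpa [mul_comm] using
      ((hAi (c * s)).hasDerivAt.comp (s : ℂ) ((hasDerivAt_id (s : ℂ)).const_mul c)).comp_ofReal
  hasDerivAt_deriv s := by
    refine ((((hAi.deriv (c * s)).hasDerivAt.comp (s : ℂ)
      ((hasDerivAt_id (s : ℂ)).const_mul c)).comp_ofReal).const_mul c).congr_deriv ?_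
    rw [hODE, Complex.real_smul]
    linear_combination (s * Ai (c * s)) * hc

lemma hasDerivAt_deriv_poissonAiry (lam t : ℝ) :
    HasDerivAt (deriv (poissonAiry Ai lam)) ((deriv Ai (primCubeRoot * lam))⁻¹ *
      ((t + primCubeRoot * lam) * Ai (t + primCubeRoot * lam))) t := by
  rw [funext fun t => (hasDerivAt_poissonAiry hAi lam t).deriv, ← hODE]
  exact ((hAi.deriv _).hasDerivAt.comp_ofReal_add).const_mul _

lemma poissonAiry_ode (lam t : ℝ) :
    Complex.exp ((-(2 * π) / 3 : ℝ) * Complex.I) *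
        (-(deriv (deriv (poissonAiry Ai lam)) t) + (t : ℂ) * poissonAiry Ai lam t)
      + (lam : ℂ) * poissonAiry Ai lam t = 0 := by
  have hinv : Complex.exp ((-(2 * π) / 3 : ℝ) * Complex.I) * primCubeRoot = 1 := by
    rw [primCubeRoot, ← Complex.exp_add, ← Complex.exp_zero]
    push_cast
    ring_nf
  rw [(hasDerivAt_deriv_poissonAiry hAi hODE lam t).deriv, poissonAiry_apply]
  linear_combination
    (-(deriv Ai (primCubeRoot * lam))⁻¹ * Ai (t + primCubeRoot * lam) * lam) * hinv

variable (hdecay : Tendsto (fun t : ℝ => Ai t) atTop (nhds 0)) (h0re : 0 < (Ai 0).re)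
  (h0im : (Ai 0).im = 0)
include hdecay h0re h0im

lemma deriv_Ai_zero_im_eq_zero_and_re_neg : (deriv Ai 0).im = 0 ∧ (deriv Ai 0).re < 0 := by
  have h : SolvesAiry (fun s : ℝ => Ai s) (fun s => deriv Ai s) := by
    simpa using solvesAiry_comp_mul hAi hODE (one_pow 3)
  have hdecay_re : Tendsto (fun t : ℝ => (Ai t).re) atTop (nhds 0) :=
    (Complex.continuous_re.tendsto 0).comp hdecay
  have hdecay_im : Tendsto (fun t : ℝ => (Ai t).im) atTop (nhds 0) :=
    (Complex.continuous_im.tendsto 0).comp hdecay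
  refine ⟨?_, ?_⟩
  · rcases lt_trichotomy (deriv Ai 0).im 0 with hneg | hzero | hpos
    · refine absurd (neg_zero (G := ℝ) ▸ hdecay_im.neg) (h.im.neg.not_tendsto_zero ?_ ?_ ?_) <;>
        simp [h0im, hneg.le, hneg]
    · exact hzero
    · refine absurd hdecay_im (h.im.not_tendsto_zero ?_ ?_ ?_) <;> simp [h0im, hpos.le, hpos]
  · by_contra! hnonneg
    exact h.re.not_tendsto_zero (by simpa using h0re.le) (by simpa using hnonneg)
      (Or.inl (by simpa using h0re)) hdecay_re

lemma star_primCubeRoot_mul_deriv_Ai_zero_re_pos_im_pos :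
    0 < (star (primCubeRoot * deriv Ai 0)).re ∧ 0 < (star (primCubeRoot * deriv Ai 0)).im := by
  obtain ⟨him, hre⟩ := deriv_Ai_zero_im_eq_zero_and_re_neg hAi hODE hdecay h0re h0im
  simp only [Complex.star_def, Complex.conj_re, Complex.conj_im, Complex.mul_re, Complex.mul_im,
    primCubeRoot_re, primCubeRoot_im, him, mul_zero, sub_zero]
  constructor <;> nlinarith [Real.sqrt_nonneg 3, Real.sq_sqrt (show (0 : ℝ) ≤ 3 by norm_num)]

lemma deriv_Ai_primCubeRoot_mul_ne_zero {lam : ℝ} (hlam : 0 ≤ lam) :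
    deriv Ai (primCubeRoot * lam) ≠ 0 := by
  have := (solvesAiry_comp_mul hAi hODE primCubeRoot_pow_three).star.deriv_ne_zero
    (by simpa using h0re.le)
    (by simpa using (star_primCubeRoot_mul_deriv_Ai_zero_re_pos_im_pos hAi hODE hdecay h0re h0im).1)
    hlam
  exact (by simpa using this : _ ∧ _).2

lemma sqrt_sub_one_mul_norm_Ai_primCubeRoot_mul_le {lam : ℝ} (hlam : 1 ≤ lam) :
    (√lam - 1) / 2 * ‖Ai (primCubeRoot * lam)‖ ≤ ‖deriv Ai (primCubeRoot * lam)‖ := by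
  obtain ⟨hre, him⟩ := star_primCubeRoot_mul_deriv_Ai_zero_re_pos_im_pos hAi hODE hdecay h0re h0im
  simpa [norm_primCubeRoot] using
    (solvesAiry_comp_mul hAi hODE primCubeRoot_pow_three).star.sqrt_sub_one_mul_norm_le
      (by simpa using h0re.le) (by simpa using hre) (by simp [h0im]) (by simpa using him) hlam

lemma integral_norm_poissonAiry_sq_le {lam : ℝ} (hlam : 9 ≤ lam) :
    ∫ t in Ioi 0, ‖poissonAiry Ai lam t‖ ^ 2 ≤ 6 / (lam * √lam) := by
  set z : ℂ := primCubeRoot * lam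
  set A := ‖Ai z‖
  set D := ‖deriv Ai z‖
  set I := ∫ t : ℝ in Ioi 0, ‖Ai (t + z)‖ ^ 2
  have hD : 0 < D := norm_pos_iff.2
    (deriv_Ai_primCubeRoot_mul_ne_zero hAi hODE hdecay h0re h0im (by linarith))
  have hI : 0 ≤ I := setIntegral_nonneg measurableSet_Ioi fun _ _ => by positivity
  have hX : ∫ t in Ioi 0, ‖poissonAiry Ai lam t‖ ^ 2 = I / D ^ 2 := by
    simp_rw [poissonAiry_apply, norm_mul, mul_pow, norm_inv, integral_const_mul]
    rw [inv_pow, inv_mul_eq_div]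
  have hzim : z.im = √3 / 2 * lam := by simp [z, primCubeRoot_im]
  have henergy : z.im * I ≤ A * D := by
    simpa using im_mul_integral_norm_sq_le (u := fun t : ℝ => Ai (t + z))
      (u' := fun t : ℝ => deriv Ai (t + z)) (fun t => (hAi _).hasDerivAt.comp_ofReal_add)
      (fun t => by simpa [hODE] using (hAi.deriv _).hasDerivAt.comp_ofReal_add)
      (by rw [hzim]; positivity)
  have hric : (√lam - 1) / 2 * A ≤ D :=
    sqrt_sub_one_mul_norm_Ai_primCubeRoot_mul_le hAi hODE hdecay h0re h0im (by linarith)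
  have hs : 3 ≤ √lam := Real.le_sqrt_of_sq_le (by linarith)
  have h1 : lam / 2 * I ≤ A * D := by
    have : 1 ≤ √3 := Real.one_le_sqrt.2 (by norm_num)
    rw [hzim] at henergy
    nlinarith [mul_nonneg (show (0 : ℝ) ≤ lam by linarith) hI]
  have h2 : √lam * A ≤ 3 * D := by nlinarith [norm_nonneg (Ai z)]
  rw [hX, div_le_div_iff₀ (by positivity) (by positivity)]
  calc I * (lam * √lam) = 2 * √lam * (lam / 2 * I) := by ring
    _ ≤ 2 * √lam * (A * D) := by gcongr
    _ = 2 * D * (√lam * A) := by ring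
    _ ≤ 2 * D * (3 * D) := by gcongr
    _ = 6 * D ^ 2 := by ring

end Airy

theorem poissonAiry_properties_general (Ai : ℂ → ℂ) (hAi : Differentiable ℂ Ai)
    (hODE : ∀ w : ℂ, deriv (deriv Ai) w = w * Ai w)
    (hdecay : Tendsto (fun t : ℝ => Ai t) atTop (nhds 0))
    (hnorm : Ai 0 = ((1 / (3 ^ ((2:ℝ)/3) * Real.Gamma (2/3)) : ℝ) : ℂ)) :
    (∀ lam : ℝ, 0 < lam →
      (∀ t ∈ Ioi (0:ℝ),
        Complex.exp ((-(2 * π) / 3 : ℝ) * Complex.I) *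
              (-(deriv (deriv (poissonAiry Ai lam)) t) + (t : ℂ) * poissonAiry Ai lam t)
            + (lam : ℂ) * poissonAiry Ai lam t = 0) ∧
      deriv (poissonAiry Ai lam) 0 = 1) ∧
    (fun lam : ℝ => Real.sqrt (∫ t in Ioi (0:ℝ), ‖poissonAiry Ai lam t‖ ^ 2))
      =O[atTop] fun lam : ℝ => lam ^ (-(3:ℝ)/4) := by
  have h0re : 0 < (Ai 0).re := by
    rw [hnorm, Complex.ofReal_re]
    have := Real.Gamma_pos_of_pos (show (0 : ℝ) < 2 / 3 by norm_num)
    positivity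
  have h0im : (Ai 0).im = 0 := by rw [hnorm, Complex.ofReal_im]
  refine ⟨fun lam hlam => ⟨fun t _ => poissonAiry_ode hAi hODE lam t,
    deriv_poissonAiry_zero hAi
      (deriv_Ai_primCubeRoot_mul_ne_zero hAi hODE hdecay h0re h0im hlam.le)⟩,
    isBigO_iff.2 ⟨√6, ?_⟩⟩
  filter_upwards [eventually_ge_atTop 9] with lam hlam
  have hlam0 : 0 < lam := by linarith
  rw [Real.norm_of_nonneg (Real.sqrt_nonneg _), Real.norm_of_nonneg (by positivity),
    ← Real.sqrt_sq (by positivity : 0 ≤ lam ^ (-(3:ℝ)/4)), ← Real.sqrt_mul (by norm_num),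
    rpow_neg_three_div_four_sq hlam0, ← div_eq_mul_inv]
  exact Real.sqrt_le_sqrt (integral_norm_poissonAiry_sq_le hAi hODE hdecay h0re h0im hlam)

/-- For `λ > 0`, `f_λ = Ai'(e^{2πi/3}λ)⁻¹ Ai(· + e^{2πi/3}λ)` solves
`e^{−2πi/3}(D_t² + t)f_λ + λ f_λ = 0` on `(0,∞)` with `f_λ'(0) = 1`, and
`‖f_λ‖_{L²(0,∞)} = O(λ^{−3/4})` as `λ → ∞`. Here `Ai` is the entire Airy function,
characterized by `Ai'' (w) = w Ai w`, decay on the positive real axis, and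
`Ai 0 = 1/(3^{2/3}Γ(2/3))`. -/
theorem poissonAiry_properties (Ai : ℂ → ℂ) (hAi : Differentiable ℂ Ai)
    (hAi' : Differentiable ℂ (deriv Ai))
    (hODE : ∀ w : ℂ, deriv (deriv Ai) w = w * Ai w)
    (hdecay : Tendsto (fun t : ℝ => Ai t) atTop (nhds 0))
    (hnorm : Ai 0 = ((1 / (3 ^ ((2:ℝ)/3) * Real.Gamma (2/3)) : ℝ) : ℂ)) :
    (∀ lam : ℝ, 0 < lam →
      (∀ t ∈ Ioi (0:ℝ),
        Complex.exp ((-(2 * π) / 3 : ℝ) * Complex.I) *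
              (-(deriv (deriv (poissonAiry Ai lam)) t) + (t : ℂ) * poissonAiry Ai lam t)
            + (lam : ℂ) * poissonAiry Ai lam t = 0) ∧
      deriv (poissonAiry Ai lam) 0 = 1) ∧
    (fun lam : ℝ => Real.sqrt (∫ t in Ioi (0:ℝ), ‖poissonAiry Ai lam t‖ ^ 2))
      =O[atTop] fun lam : ℝ => lam ^ (-(3:ℝ)/4) :=
  poissonAiry_properties_general Ai hAi hODE hdecay hnorm
end

section
/- Consider the operator (−d²/dx² − z, γ_1) with γ_1 u = u'(0), on D' = {u ∈ H²(0,π) : u'(π) = 0}, augmented by R_+ u = (1/π)∫_0^π u dx and R_− u_− = u_−/π. Then for Re z < 1 the bordered operator sending (u, u_−) ∈ D' × ℂ to (−u'' − zu + u_−/π, u'(0), (1/π)∫_0^π u dx) ∈ L²(0,π) × ℂ × ℂ is bijective, and the effective Hamiltonian (the (−,+)-entry of the inverse, mapping v_+ to u_− when v = 0 and v_0 = 0) equals E_{−+}(z) = πz, the same as for the Neumann Grushin problem. -/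
/-!
Integrating the equation over `[0, π]` and using the boundary conditions gives
`u₋ = -v₀ + π z v₊ + ∫ v`. With `u₋` known, `u` solves `u'' + z u = u₋/π - v`, `u'(0) = v₀`,
whose solutions form the line `u₀ + a cos(√z x)`; the mean condition fixes `a` uniquely because
`∫₀^π cos(√z x) dx = sin(√z π)/√z` vanishes only when `z = k²` with `k ≠ 0` an integer, which
`Re z < 1` excludes. The condition `u'(π) = 0` then holds automatically by the integrated identity.
-/

open Real Set

theorem eqOn_Icc_of_hasDerivAt_neg_mul {z : ℂ} {a b : ℝ} {f₁ f₂ d₁ d₂ : ℝ → ℂ}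
    (hf₁ : ∀ x ∈ Icc a b, HasDerivAt f₁ (d₁ x) x)
    (hd₁ : ∀ x ∈ Icc a b, HasDerivAt d₁ (-z * f₁ x) x)
    (hf₂ : ∀ x ∈ Icc a b, HasDerivAt f₂ (d₂ x) x)
    (hd₂ : ∀ x ∈ Icc a b, HasDerivAt d₂ (-z * f₂ x) x)
    (h₀ : f₁ a = f₂ a) (h₀' : d₁ a = d₂ a) : EqOn f₁ f₂ (Icc a b) := by
  have hlip : ∀ _ : ℝ, LipschitzWith (max 1 (‖-z‖₊ * 1)) fun p : ℂ × ℂ => (p.2, -z * p.1) :=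
    fun _ => LipschitzWith.prodMk LipschitzWith.prod_snd
      ((lipschitzWith_smul (-z)).comp LipschitzWith.prod_fst)
  have hpair := ODE_solution_unique hlip
    (fun t ht => ((hf₁ t ht).continuousAt.prodMk (hd₁ t ht).continuousAt).continuousWithinAt)
    (fun t ht => ((hf₁ t (Ico_subset_Icc_self ht)).prodMk
      (hd₁ t (Ico_subset_Icc_self ht))).hasDerivWithinAt)
    (fun t ht => ((hf₂ t ht).continuousAt.prodMk (hd₂ t ht).continuousAt).continuousWithinAt)
    (fun t ht => ((hf₂ t (Ico_subset_Icc_self ht)).prodMk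
      (hd₂ t (Ico_subset_Icc_self ht))).hasDerivWithinAt)
    (Prod.ext h₀ h₀')
  exact fun x hx => congrArg Prod.fst (hpair hx)

theorem contDiff_two_of_hasDerivAt {u u' u'' : ℝ → ℂ} (hu : ∀ x, HasDerivAt u (u' x) x)
    (hu' : ∀ x, HasDerivAt u' (u'' x) x) (hu'' : Continuous u'') : ContDiff ℝ 2 u := by
  rw [show (2 : WithTop ℕ∞) = 1 + 1 from rfl, contDiff_succ_iff_deriv]
  refine ⟨fun x => (hu x).differentiableAt, by simp, ?_⟩
  rw [show deriv u = u' from funext fun x => (hu x).deriv, contDiff_one_iff_deriv,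
    show deriv u' = u'' from funext fun x => (hu' x).deriv]
  exact ⟨fun x => (hu' x).differentiableAt, hu''⟩

theorem integral_deriv_deriv {u : ℝ → ℂ} (hu : ContDiff ℝ 2 u) (a b : ℝ) :
    ∫ x in a..b, deriv (deriv u) x = deriv u b - deriv u a :=
  intervalIntegral.integral_deriv_eq_sub (fun x _ => hu.differentiable_deriv_two x)
    ((hu.deriv' (n := 1)).continuous_deriv_one.intervalIntegrable a b)

/-- `S` and `C` play the roles of `sin (√z x) / √z` and `cos (√z x)`, which make sense for every
`z`, including `z = 0`. -/
structure IsSinCosPair (z : ℂ) (S C : ℝ → ℂ) : Prop where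
  sin_zero : S 0 = 0
  cos_zero : C 0 = 1
  hasDerivAt_sin : ∀ x, HasDerivAt S (C x) x
  hasDerivAt_cos : ∀ x, HasDerivAt C (-z * S x) x

namespace IsSinCosPair

variable {z : ℂ} {S C : ℝ → ℂ}

theorem continuous_sin (h : IsSinCosPair z S C) : Continuous S :=
  continuous_iff_continuousAt.2 fun x => (h.hasDerivAt_sin x).continuousAt

theorem continuous_cos (h : IsSinCosPair z S C) : Continuous C :=
  continuous_iff_continuousAt.2 fun x => (h.hasDerivAt_cos x).continuousAt

theorem cos_sq_add_mul_sin_sq (h : IsSinCosPair z S C) (x : ℝ) : C x ^ 2 + z * S x ^ 2 = 1 := by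
  have hderiv : ∀ t, HasDerivAt (fun t => C t ^ 2 + z * S t ^ 2) 0 t := fun t => by
    have := ((h.hasDerivAt_cos t).pow 2).add (((h.hasDerivAt_sin t).pow 2).const_mul z)
    exact this.congr_deriv <| by
      simp only [Nat.cast_ofNat, Nat.add_one_sub_one, pow_one, neg_mul, mul_neg]; ring
  have hconst := is_const_of_deriv_eq_zero (fun t => (hderiv t).differentiableAt)
    (fun t => (hderiv t).deriv) x 0
  simpa [h.sin_zero, h.cos_zero] using hconst

theorem integral_cos (h : IsSinCosPair z S C) (b : ℝ) : ∫ x in (0 : ℝ)..b, C x = S b := by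
  rw [intervalIntegral.integral_eq_sub_of_hasDerivAt (fun x _ => h.hasDerivAt_sin x)
    (h.continuous_cos.intervalIntegrable 0 b), h.sin_zero, sub_zero]

theorem exists_solution (h : IsSinCosPair z S C) {g : ℝ → ℂ} (hg : Continuous g) (b : ℂ) :
    ∃ u u' : ℝ → ℂ, (∀ x, HasDerivAt u (u' x) x) ∧ (∀ x, HasDerivAt u' (g x - z * u x) x) ∧
      u 0 = 0 ∧ u' 0 = b := by
  set IC : ℝ → ℂ := fun x => ∫ t in (0 : ℝ)..x, C t * g t
  set IS : ℝ → ℂ := fun x => ∫ t in (0 : ℝ)..x, S t * g t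
  have hIC : ∀ x, HasDerivAt IC (C x * g x) x := fun x =>
    ((h.continuous_cos.mul hg).integral_hasStrictDerivAt 0 x).hasDerivAt
  have hIS : ∀ x, HasDerivAt IS (S x * g x) x := fun x =>
    ((h.continuous_sin.mul hg).integral_hasStrictDerivAt 0 x).hasDerivAt
  -- variation of constants; the Wronskian identity `C² + z S² = 1` makes the second derivative work
  refine ⟨fun x => b * S x + (S x * IC x - C x * IS x),
    fun x => b * C x + (C x * IC x + z * (S x * IS x)), fun x => ?_, fun x => ?_, ?_, ?_⟩
  · have := ((h.hasDerivAt_sin x).const_mul b).add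
      (((h.hasDerivAt_sin x).mul (hIC x)).sub ((h.hasDerivAt_cos x).mul (hIS x)))
    exact this.congr_deriv (by ring)
  · have := ((h.hasDerivAt_cos x).const_mul b).add
      (((h.hasDerivAt_cos x).mul (hIC x)).add (((h.hasDerivAt_sin x).mul (hIS x)).const_mul z))
    exact this.congr_deriv (by linear_combination g x * h.cos_sq_add_mul_sin_sq x)
  · simp [IC, IS, h.sin_zero]
  · simp [IC, IS, h.sin_zero, h.cos_zero]

end IsSinCosPair

theorem isSinCosPair_zero : IsSinCosPair 0 (fun x => x) (fun _ => 1) where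
  sin_zero := by simp
  cos_zero := rfl
  hasDerivAt_sin x := by simpa using (hasDerivAt_id x).ofReal_comp
  hasDerivAt_cos x := by simpa using hasDerivAt_const x (1 : ℂ)

theorem isSinCosPair_sin_cos {w : ℂ} (hw : w ≠ 0) :
    IsSinCosPair (w ^ 2) (fun x => Complex.sin (w * x) / w) (fun x => Complex.cos (w * x)) where
  sin_zero := by simp
  cos_zero := by simp
  hasDerivAt_sin x := by
    have h := (((Complex.hasDerivAt_sin _).comp (x : ℂ)
      ((hasDerivAt_id _).const_mul w)).comp_ofReal).div_const w
    exact h.congr_deriv (by simp [hw])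
  hasDerivAt_cos x := by
    have h := ((Complex.hasDerivAt_cos _).comp (x : ℂ)
      ((hasDerivAt_id _).const_mul w)).comp_ofReal
    exact h.congr_deriv (by simp only [id_eq, mul_one, neg_mul, neg_inj]; field_simp)

theorem one_le_re_intCast_sq {k : ℤ} (hk : k ≠ 0) : 1 ≤ ((k : ℂ) ^ 2).re := by
  have : (1 : ℤ) ≤ k ^ 2 := by nlinarith [Int.one_le_abs hk, sq_abs k]
  rw [← Complex.ofReal_intCast, ← Complex.ofReal_pow, Complex.ofReal_re]
  exact_mod_cast this

theorem exists_isSinCosPair_sin_pi_ne_zero {z : ℂ} (hz : z.re < 1) :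
    ∃ S C, IsSinCosPair z S C ∧ S π ≠ 0 := by
  rcases eq_or_ne z 0 with rfl | hz0
  · exact ⟨_, _, isSinCosPair_zero, Complex.ofReal_ne_zero.2 pi_ne_zero⟩
  obtain ⟨w, rfl⟩ := IsAlgClosed.exists_pow_nat_eq z two_pos
  have hw : w ≠ 0 := by rintro rfl; simp at hz0
  refine ⟨_, _, isSinCosPair_sin_cos hw, fun hπ => ?_⟩
  obtain ⟨k, hk⟩ := Complex.sin_eq_zero_iff.1 ((div_eq_zero_iff.1 hπ).resolve_right hw)
  have hwk : w = k := mul_right_cancel₀ (Complex.ofReal_ne_zero.2 pi_ne_zero) hk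
  have hk0 : k ≠ 0 := by rintro rfl; simp [hwk] at hw
  exact (one_le_re_intCast_sq hk0).not_gt (hwk ▸ hz)

structure IsGrushinSolution (z : ℂ) (v : ℝ → ℂ) (v₀ vp : ℂ) (u : ℝ → ℂ) (um : ℂ) : Prop where
  contDiff : ContDiff ℝ 2 u
  eq : ∀ x ∈ Icc (0:ℝ) π, -(deriv (deriv u) x) - z * u x + um / (π : ℂ) = v x
  deriv_zero : deriv u 0 = v₀
  deriv_pi : deriv u π = 0
  mean : (1 / (π : ℂ)) * (∫ x in (0:ℝ)..π, u x) = vp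

theorem deriv_pi_sub_deriv_zero {z um : ℂ} {u v : ℝ → ℂ} (hv : ContinuousOn v (Icc 0 π))
    (hu : ContDiff ℝ 2 u)
    (heq : ∀ x ∈ Icc (0:ℝ) π, -(deriv (deriv u) x) - z * u x + um / (π : ℂ) = v x) :
    deriv u π - deriv u 0 = um - z * (∫ x in (0:ℝ)..π, u x) - ∫ x in (0:ℝ)..π, v x := by
  have hπ : (π : ℂ) ≠ 0 := Complex.ofReal_ne_zero.2 pi_ne_zero
  have hIcc : uIcc 0 π = Icc 0 π := uIcc_of_le pi_nonneg
  have hvi : IntervalIntegrable v MeasureTheory.volume 0 π := (hIcc ▸ hv).intervalIntegrable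
  have hui : IntervalIntegrable u MeasureTheory.volume 0 π :=
    hu.continuous.intervalIntegrable 0 π
  rw [← integral_deriv_deriv hu,
    intervalIntegral.integral_congr (g := fun x => um / π - z * u x - v x)
    (hIcc ▸ fun x hx => by linear_combination -heq x hx),
    intervalIntegral.integral_sub (intervalIntegrable_const.sub (hui.const_mul z)) hvi,
    intervalIntegral.integral_sub intervalIntegrable_const (hui.const_mul z),
    intervalIntegral.integral_const, intervalIntegral.integral_const_mul, sub_zero,
    Complex.real_smul, mul_div_cancel₀ _ hπ]

namespace IsGrushinSolution

variable {z : ℂ} {v : ℝ → ℂ} {v₀ vp : ℂ}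

theorem integral_eq {u : ℝ → ℂ} {um : ℂ} (h : IsGrushinSolution z v v₀ vp u um) :
    ∫ x in (0:ℝ)..π, u x = π * vp := by
  rw [← h.mean, ← mul_assoc, mul_one_div_cancel (Complex.ofReal_ne_zero.2 pi_ne_zero), one_mul]

theorem um_eq {u : ℝ → ℂ} {um : ℂ} (hv : ContinuousOn v (Icc 0 π))
    (h : IsGrushinSolution z v v₀ vp u um) :
    um = -v₀ + π * z * vp + ∫ x in (0:ℝ)..π, v x := by
  have hint := deriv_pi_sub_deriv_zero hv h.contDiff h.eq
  rw [h.deriv_pi, h.deriv_zero, h.integral_eq] at hint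
  linear_combination -hint

theorem eqOn {u₁ u₂ : ℝ → ℂ} {um₁ um₂ : ℂ} (hz : z.re < 1) (hv : ContinuousOn v (Icc 0 π))
    (h₁ : IsGrushinSolution z v v₀ vp u₁ um₁) (h₂ : IsGrushinSolution z v v₀ vp u₂ um₂) :
    EqOn u₁ u₂ (Icc 0 π) := by
  obtain ⟨S, C, hSC, hSπ⟩ := exists_isSinCosPair_sin_pi_ne_zero hz
  have hum : um₁ = um₂ := (h₁.um_eq hv).trans (h₂.um_eq hv).symm
  have hdiff : EqOn (fun x => u₁ x - u₂ x) (fun x => (u₁ 0 - u₂ 0) * C x) (Icc 0 π) := by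
    refine eqOn_Icc_of_hasDerivAt_neg_mul (z := z) (d₁ := fun x => deriv u₁ x - deriv u₂ x)
      (d₂ := fun x => (u₁ 0 - u₂ 0) * (-z * S x)) (fun x _ => ?_) (fun x hx => ?_)
      (fun x _ => (hSC.hasDerivAt_cos x).const_mul _)
      (fun x _ => (((hSC.hasDerivAt_sin x).const_mul _).const_mul _).congr_deriv (by ring))
      (by simp [hSC.cos_zero])
      (by simp [h₁.deriv_zero, h₂.deriv_zero, hSC.sin_zero])
    · exact ((h₁.contDiff.differentiable two_ne_zero x).hasDerivAt).sub
        (h₂.contDiff.differentiable two_ne_zero x).hasDerivAt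
    · refine ((h₁.contDiff.differentiable_deriv_two x).hasDerivAt.sub
        (h₂.contDiff.differentiable_deriv_two x).hasDerivAt).congr_deriv ?_
      linear_combination h₂.eq x hx - h₁.eq x hx + hum / (π : ℂ)
  have hb : (u₁ 0 - u₂ 0) * S π = 0 := by
    rw [← hSC.integral_cos, ← intervalIntegral.integral_const_mul,
      ← intervalIntegral.integral_congr (uIcc_of_le pi_nonneg ▸ hdiff),
      intervalIntegral.integral_sub (h₁.contDiff.continuous.intervalIntegrable 0 π)
        (h₂.contDiff.continuous.intervalIntegrable 0 π), h₁.integral_eq, h₂.integral_eq, sub_self]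
  intro x hx
  simpa [sub_eq_zero, (mul_eq_zero.1 hb).resolve_right hSπ] using hdiff hx

end IsGrushinSolution

theorem exists_isGrushinSolution {z : ℂ} (hz : z.re < 1) {v : ℝ → ℂ}
    (hv : ContinuousOn v (Icc 0 π)) (v₀ vp : ℂ) :
    ∃ u um, IsGrushinSolution z v v₀ vp u um := by
  obtain ⟨S, C, hSC, hSπ⟩ := exists_isSinCosPair_sin_pi_ne_zero hz
  -- `v` is only continuous on `[0, π]`: extend it by constants to a continuous function on `ℝ`.
  set g := IccExtend pi_nonneg ((Icc 0 π).domRestrict v)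
  have hg : Continuous g := (continuousOn_iff_continuous_domRestrict.1 hv).Icc_extend'
  set um := -v₀ + π * z * vp + ∫ x in (0:ℝ)..π, v x
  obtain ⟨u₀, u₀', hu₀, hu₀', hu₀0, hu₀'0⟩ :=
    hSC.exists_solution (g := fun x => um / π - g x) (continuous_const.sub hg) v₀
  set a := (π * vp - ∫ x in (0:ℝ)..π, u₀ x) / S π
  set u := fun x => u₀ x + a * C x
  have hu : ∀ x, HasDerivAt u (u₀' x + a * (-z * S x)) x := fun x =>
    (hu₀ x).add ((hSC.hasDerivAt_cos x).const_mul a)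
  have hu' : ∀ x, HasDerivAt (fun x => u₀' x + a * (-z * S x)) (um / π - g x - z * u x) x :=
    fun x => ((hu₀' x).add (((hSC.hasDerivAt_sin x).const_mul (-z)).const_mul a)).congr_deriv
      (by simp only [u]; ring)
  have hu₀c : Continuous u₀ := continuous_iff_continuousAt.2 fun x => (hu₀ x).continuousAt
  have hcd : ContDiff ℝ 2 u := contDiff_two_of_hasDerivAt hu hu' <|
    (continuous_const.sub hg).sub <|
      continuous_const.mul (hu₀c.add (continuous_const.mul hSC.continuous_cos))
  have hderiv : deriv u = fun x => u₀' x + a * (-z * S x) := funext fun x => (hu x).deriv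
  have heq : ∀ x ∈ Icc (0:ℝ) π, -(deriv (deriv u) x) - z * u x + um / (π : ℂ) = v x := by
    intro x hx
    have hgx : g x = v x := IccExtend_of_mem pi_nonneg _ hx
    rw [hderiv, (hu' x).deriv]
    linear_combination hgx
  have hintegral : ∫ x in (0:ℝ)..π, u x = π * vp := by
    change ∫ x in (0:ℝ)..π, (u₀ x + a * C x) = _
    rw [intervalIntegral.integral_add (hu₀c.intervalIntegrable 0 π)
      ((hSC.continuous_cos.intervalIntegrable 0 π).const_mul a),
      intervalIntegral.integral_const_mul, hSC.integral_cos, div_mul_cancel₀ _ hSπ]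
    ring
  have hderiv0 : deriv u 0 = v₀ := by simp [hderiv, hu₀'0, hSC.sin_zero]
  refine ⟨u, um, hcd, heq, hderiv0, ?_, ?_⟩
  · have hint := deriv_pi_sub_deriv_zero hv hcd heq
    rw [hderiv0, hintegral] at hint
    linear_combination hint
  · rw [hintegral, ← mul_assoc, one_div_mul_cancel (Complex.ofReal_ne_zero.2 pi_ne_zero), one_mul]

/-- Boundary-operator Grushin problem on `[0,π]` for `(−d²/dx² − z, γ₁)` with
`γ₁u = u'(0)`, `R₊u = (1/π)∫u`, `R₋u₋ = u₋/π`, on `D' = {u ∈ H² : u'(π) = 0}`.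
For `Re z < 1` the bordered problem is uniquely solvable and the effective Hamiltonian
satisfies `u₋ = −v₀ + πz v₊ + ∫v`; in particular (for `v = 0`, `v₀ = 0`)
`E₋₊(z) = πz`, the same as for the Neumann Grushin problem. -/
theorem boundary_grushin_model (z : ℂ) (hz : z.re < 1)
    (v : ℝ → ℂ) (hv : ContinuousOn v (Icc 0 π)) (v₀ vp : ℂ) :
    (∃ (u : ℝ → ℂ) (um : ℂ), ContDiff ℝ 2 u ∧
      (∀ x ∈ Icc (0:ℝ) π, -(deriv (deriv u) x) - z * u x + um / (π : ℂ) = v x) ∧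
      deriv u 0 = v₀ ∧ deriv u π = 0 ∧
      (1 / (π : ℂ)) * (∫ x in (0:ℝ)..π, u x) = vp ∧
      um = -v₀ + (π : ℂ) * z * vp + ∫ x in (0:ℝ)..π, v x) ∧
    (∀ (u₁ u₂ : ℝ → ℂ) (um₁ um₂ : ℂ),
      ContDiff ℝ 2 u₁ →
      (∀ x ∈ Icc (0:ℝ) π, -(deriv (deriv u₁) x) - z * u₁ x + um₁ / (π : ℂ) = v x) →
      deriv u₁ 0 = v₀ → deriv u₁ π = 0 →
      (1 / (π : ℂ)) * (∫ x in (0:ℝ)..π, u₁ x) = vp →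
      ContDiff ℝ 2 u₂ →
      (∀ x ∈ Icc (0:ℝ) π, -(deriv (deriv u₂) x) - z * u₂ x + um₂ / (π : ℂ) = v x) →
      deriv u₂ 0 = v₀ → deriv u₂ π = 0 →
      (1 / (π : ℂ)) * (∫ x in (0:ℝ)..π, u₂ x) = vp →
      um₁ = um₂ ∧ EqOn u₁ u₂ (Icc (0:ℝ) π)) := by
  obtain ⟨u, um, h⟩ := exists_isGrushinSolution hz hv v₀ vp
  refine ⟨⟨u, um, h.contDiff, h.eq, h.deriv_zero, h.deriv_pi, h.mean, h.um_eq hv⟩, ?_⟩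
  intro u₁ u₂ um₁ um₂ hc₁ he₁ hd₁ hp₁ hm₁ hc₂ he₂ hd₂ hp₂ hm₂
  have h₁ : IsGrushinSolution z v v₀ vp u₁ um₁ := ⟨hc₁, he₁, hd₁, hp₁, hm₁⟩
  have h₂ : IsGrushinSolution z v v₀ vp u₂ um₂ := ⟨hc₂, he₂, hd₂, hp₂, hm₂⟩
  exact ⟨(h₁.um_eq hv).trans (h₂.um_eq hv).symm, h₁.eqOn hz hv h₂⟩
end
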